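/- arXiv:2111.06295 — 7 statements merged into one kernel-verified Lean document; each statement's English description precedes it below -/
import Mathlib

section
/- Let n, u, c be natural numbers, e := u + c, and let N0 : Matrix (Fin e) (Fin u) ℝ, h : Matrix (Fin u) (Fin e) ℝ and C0 : Matrix (Fin c) (Fin e) ℝ satisfy h * N0 = 1, C0 * N0 = 0, and suppose C0 has trivial left kernel (for every y : Fin c → ℝ, y ᵥ* C0 = 0 implies y = 0). Then the square matrix obtained by stacking h on top of C0 (the matrix Matrix.fromRows h C0, reindexed along Fin u ⊕ Fin c ≃ Fin e) is invertible, and there exists hΓ : Matrix (Fin e) (Fin c) ℝ such that C0 * hΓ = 1, h * hΓ = 0, and N0 * h + hΓ * C0 = 1 (the e × e identity); in other words, the inverse of the stacked matrix is the matrix with column blocks N0 and hΓ. -/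
/-!
If `a ᵥ* h + b ᵥ* C0 = 0`, multiplying on the right by `N0` gives `a = 0`, and then `b = 0` by
the kernel condition; so the stacked square matrix has trivial left kernel and is invertible.
Writing its inverse in column blocks `[N | hΓ]`, the identity `N * h + hΓ * C0 = 1` multiplied
on the right by `N0` forces `N = N0`.
-/

open Matrix

namespace Matrix

variable {R : Type*} {m p o : Type*}

theorem fromRows_mul_fromCols_eq_one_iff [Semiring R] [Fintype o] [DecidableEq m] [DecidableEq p]
    {A₁ : Matrix m o R} {A₂ : Matrix p o R} {B₁ : Matrix o m R} {B₂ : Matrix o p R} :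
    fromRows A₁ A₂ * fromCols B₁ B₂ = 1 ↔
      A₁ * B₁ = 1 ∧ A₁ * B₂ = 0 ∧ A₂ * B₁ = 0 ∧ A₂ * B₂ = 1 := by
  rw [fromRows_mul_fromCols, ← fromBlocks_one, fromBlocks_inj]

theorem reindex_mul_reindex_eq_one_iff [Semiring R] [Fintype o] [DecidableEq m] [DecidableEq o]
    (e : m ≃ o) (M : Matrix m o R) (X : Matrix o m R) :
    reindex e (Equiv.refl o) M * reindex (Equiv.refl o) e X = 1 ↔ M * X = 1 := by
  rw [reindex_apply, reindex_apply, Equiv.refl_symm, submatrix_mul_equiv,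
    ← submatrix_one_equiv e.symm, ← reindex_apply, ← reindex_apply, Equiv.apply_eq_iff_eq]

theorem vecMul_fromRows_injective [Ring R] [Fintype m] [Fintype p] [Fintype o] [DecidableEq m]
    {A : Matrix m o R} {C : Matrix p o R} {N : Matrix o m R}
    (hAN : A * N = 1) (hCN : C * N = 0) (hC : ∀ y, y ᵥ* C = 0 → y = 0) :
    Function.Injective (fromRows A C).vecMul := by
  intro v w hvw
  set x := v - w
  have hx : x ∘ Sum.inl ᵥ* A + x ∘ Sum.inr ᵥ* C = 0 := by
    rw [← vecMul_fromRows, sub_vecMul]; exact sub_eq_zero.2 hvw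
  have hinl : x ∘ Sum.inl = 0 := by
    simpa [add_vecMul, vecMul_vecMul, hAN, hCN] using congrArg (· ᵥ* N) hx
  have hinr : x ∘ Sum.inr = 0 := hC _ (by simpa [hinl] using hx)
  refine sub_eq_zero.1 (funext ?_)
  rintro (i | j)
  exacts [congrFun hinl i, congrFun hinr j]

theorem isUnit_reindex_of_vecMul_injective {K : Type*} [Field K] [Fintype m] [Fintype o]
    [DecidableEq o] (e : m ≃ o) {M : Matrix m o K} (hM : Function.Injective M.vecMul) :
    IsUnit (reindex e (Equiv.refl o) M) := by
  rw [← vecMul_injective_iff_isUnit]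
  intro v w hvw
  simp only [reindex_apply, submatrix_vecMul_equiv, Equiv.symm_symm, Equiv.refl_symm,
    Equiv.coe_refl, Function.comp_id] at hvw
  exact e.surjective.injective_comp_right (hM hvw)

theorem exists_mul_eq_one_of_isUnit_reindex [Semiring R] [Fintype o] [DecidableEq m]
    [DecidableEq o] (e : m ≃ o) {M : Matrix m o R} (hM : IsUnit (reindex e (Equiv.refl o) M)) :
    ∃ X : Matrix o m R, M * X = 1 := by
  obtain ⟨Y, hY⟩ := hM.exists_right_inv
  refine ⟨(reindex (Equiv.refl o) e).symm Y, ?_⟩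
  rwa [← reindex_mul_reindex_eq_one_iff e, Equiv.apply_symm_apply]

end Matrix

theorem stmt_0_general (u c : ℕ)
    (N0 : Matrix (Fin (u + c)) (Fin u) ℝ)
    (h : Matrix (Fin u) (Fin (u + c)) ℝ)
    (C0 : Matrix (Fin c) (Fin (u + c)) ℝ)
    (hhN : h * N0 = 1)
    (hCN : C0 * N0 = 0)
    (hker : ∀ y : Fin c → ℝ, y ᵥ* C0 = 0 → y = 0) :
    IsUnit (Matrix.reindex finSumFinEquiv (Equiv.refl (Fin (u + c)))
      (Matrix.fromRows h C0)) ∧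
    ∃ hΓ : Matrix (Fin (u + c)) (Fin c) ℝ,
      C0 * hΓ = 1 ∧ h * hΓ = 0 ∧ N0 * h + hΓ * C0 = 1 ∧
      (Matrix.reindex finSumFinEquiv (Equiv.refl (Fin (u + c))) (Matrix.fromRows h C0)) *
        (Matrix.reindex (Equiv.refl (Fin (u + c))) finSumFinEquiv
          (Matrix.fromCols N0 hΓ)) = 1 := by
  have hunit :=
    isUnit_reindex_of_vecMul_injective finSumFinEquiv (vecMul_fromRows_injective hhN hCN hker)
  obtain ⟨X, hMX⟩ := exists_mul_eq_one_of_isUnit_reindex finSumFinEquiv hunit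
  have hXM : X * fromRows h C0 = 1 := (mul_eq_one_comm_of_equiv finSumFinEquiv).1 hMX
  rw [← fromCols_toCols X] at hMX hXM
  obtain ⟨-, hhΓ, -, hCΓ⟩ := fromRows_mul_fromCols_eq_one_iff.1 hMX
  rw [fromCols_mul_fromRows] at hXM
  have hN : X.toCols₁ = N0 := calc
    X.toCols₁ = (X.toCols₁ * h + X.toCols₂ * C0) * N0 := by
      rw [Matrix.add_mul, Matrix.mul_assoc, Matrix.mul_assoc, hhN, hCN, Matrix.mul_one,
        Matrix.mul_zero, add_zero]
    _ = N0 := by rw [hXM, Matrix.one_mul]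
  rw [hN] at hMX hXM
  exact ⟨hunit, X.toCols₂, hCΓ, hhΓ, hXM, (reindex_mul_reindex_eq_one_iff _ _ _).2 hMX⟩

/-- The reduction `h` and the time component `C0` of the Geroch fields stack into an
invertible matrix, whose inverse has column blocks `N0` and `hΓ`. -/
theorem stmt_0 (n u c : ℕ)
    (N0 : Matrix (Fin (u + c)) (Fin u) ℝ)
    (h : Matrix (Fin u) (Fin (u + c)) ℝ)
    (C0 : Matrix (Fin c) (Fin (u + c)) ℝ)
    (hhN : h * N0 = 1)
    (hCN : C0 * N0 = 0)
    (hker : ∀ y : Fin c → ℝ, y ᵥ* C0 = 0 → y = 0) :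
    IsUnit (Matrix.reindex finSumFinEquiv (Equiv.refl (Fin (u + c)))
      (Matrix.fromRows h C0)) ∧
    ∃ hΓ : Matrix (Fin (u + c)) (Fin c) ℝ,
      C0 * hΓ = 1 ∧ h * hΓ = 0 ∧ N0 * h + hΓ * C0 = 1 ∧
      (Matrix.reindex finSumFinEquiv (Equiv.refl (Fin (u + c))) (Matrix.fromRows h C0)) *
        (Matrix.reindex (Equiv.refl (Fin (u + c))) finSumFinEquiv
          (Matrix.fromCols N0 hΓ)) = 1 :=
  stmt_0_general u c N0 h C0 hhN hCN hker
end

section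
/- Fix n, u, c, m : ℕ and e := u + c. Let N a : Matrix (Fin e) (Fin u) ℝ for a ∈ Fin (n+1), let C a : Matrix (Fin c) (Fin e) ℝ satisfy (C a) * (N b) + (C b) * (N a) = 0 for all a, b, and let h : Matrix (Fin u) (Fin e) ℝ, hΓ : Matrix (Fin e) (Fin c) ℝ satisfy h * (N 0) = 1 and (N 0) * h + hΓ * (C 0) = 1. Let M : Fin m → (Fin (n+1) → (Fin e → ℝ)) be a family of row-vector fields such that for every j and all a, b: (M j a) ᵥ* (N b) + (M j b) ᵥ* (N a) = 0 and (M j a) ᵥ* (N 0) = 0. Assume the spanning condition: every Y : Fin (n+1) → (Fin e → ℝ) satisfying (Y a) ᵥ* (N b) + (Y b) ᵥ* (N a) = 0 for all a, b and (Y a) ᵥ* (N 0) = 0 for all a, lies in the ℝ-linear span of {M j}. Then every Geroch field X : Fin (n+1) → (Fin e → ℝ) (i.e. every X with (X a) ᵥ* (N b) + (X b) ᵥ* (N a) = 0 for all a, b) decomposes as a linear combination: there exist S : Fin c → ℝ and T : Fin m → ℝ with X a = S ᵥ* (C a) + ∑ j, T j • (M j a) for every a, and one may take S = (X 0) ᵥ*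 hΓ. -/
open Matrix

/-- Every Geroch field decomposes as a linear combination of the chosen fields `C a`
and the extra fields `M j`, with coefficients `S = (X 0) ᵥ* hΓ`. -/
theorem stmt_1 (n u c m : ℕ)
    (N : Fin (n + 1) → Matrix (Fin (u + c)) (Fin u) ℝ)
    (C : Fin (n + 1) → Matrix (Fin c) (Fin (u + c)) ℝ)
    (hGeroch : ∀ a b, C a * N b + C b * N a = 0)
    (h : Matrix (Fin u) (Fin (u + c)) ℝ)
    (hΓ : Matrix (Fin (u + c)) (Fin c) ℝ)
    (hhN : h * N 0 = 1)
    (hinv : N 0 * h + hΓ * C 0 = 1)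
    (M : Fin m → Fin (n + 1) → Fin (u + c) → ℝ)
    (hM : ∀ j a b, (M j a) ᵥ* (N b) + (M j b) ᵥ* (N a) = 0)
    (hM0 : ∀ j a, (M j a) ᵥ* (N 0) = 0)
    (hspan : ∀ Y : Fin (n + 1) → Fin (u + c) → ℝ,
      (∀ a b, (Y a) ᵥ* (N b) + (Y b) ᵥ* (N a) = 0) →
      (∀ a, (Y a) ᵥ* (N 0) = 0) →
      ∃ T : Fin m → ℝ, ∀ a, Y a = ∑ j, T j • M j a) :
    ∀ X : Fin (n + 1) → Fin (u + c) → ℝ,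
      (∀ a b, (X a) ᵥ* (N b) + (X b) ᵥ* (N a) = 0) →
      ∃ (S : Fin c → ℝ) (T : Fin m → ℝ),
        (∀ a, X a = S ᵥ* (C a) + ∑ j, T j • M j a) ∧ S = (X 0) ᵥ* hΓ := by
  intro X hX
  set S : Fin c → ℝ := (X 0) ᵥ* hΓ with hS
  have hX00 : (X 0) ᵥ* (N 0) = 0 := by
    have h2 : (2 : ℝ) • ((X 0) ᵥ* (N 0)) = 0 := by
      rw [two_smul]; exact hX 0 0
    simpa using smul_eq_zero.mp h2
  have hYG : ∀ a b, (X a - S ᵥ* C a) ᵥ* (N b) + (X b - S ᵥ* C b) ᵥ* (N a) = 0 := by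
    intro a b
    have h2 : S ᵥ* (C a * N b) + S ᵥ* (C b * N a) = 0 := by
      rw [← vecMul_add, hGeroch a b, vecMul_zero]
    simp only [sub_vecMul, vecMul_vecMul]
    linear_combination hX a b - h2
  have hY0 : ∀ a, (X a - S ᵥ* C a) ᵥ* (N 0) = 0 := by
    intro a
    have hXa : (X a) ᵥ* (N 0) = -((X 0) ᵥ* (N a)) :=
      eq_neg_of_add_eq_zero_left (hX a 0)
    have hCa : C a * N 0 = -(C 0 * N a) :=
      eq_neg_of_add_eq_zero_left (hGeroch a 0)
    have hΓC : hΓ * C 0 = 1 - N 0 * h := eq_sub_of_add_eq' hinv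
    have key : S ᵥ* (C a * N 0) = -((X 0) ᵥ* (N a)) := by
      rw [hCa, vecMul_neg, hS, vecMul_vecMul, ← Matrix.mul_assoc, hΓC,
        Matrix.sub_mul, Matrix.one_mul, vecMul_sub, Matrix.mul_assoc, ← vecMul_vecMul,
        hX00, zero_vecMul, sub_zero]
    simp only [sub_vecMul, vecMul_vecMul, hXa, key, sub_self]
  obtain ⟨T, hT⟩ := hspan (fun a => X a - S ᵥ* C a) hYG hY0
  exact ⟨S, T, fun a => by linear_combination hT a, rfl⟩
end

section
/- Fix n, u, c : ℕ and e := u + c. Let N a : Matrix (Fin e) (Fin u) ℝ and C a : Matrix (Fin c) (Fin e) ℝ, for a ∈ Fin (n+1), be constant matrices satisfying (C a) * (N b) + (C b) * (N a) = 0 for all a, b, and let h : Matrix (Fin u) (Fin e) ℝ, hΓ : Matrix (Fin e) (Fin c) ℝ satisfy h * (N 0) = 1, (N 0) * h + hΓ * (C 0) = 1, and (C 0) * hΓ = 1. For every twice continuously differentiable φ : (Fin (n+1) → ℝ) → (Fin u → ℝ), define E x := ∑ b, (N b).mulVec (∂_b φ x), the evolution residual e x := h.mulVec (E x), and the constraints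 ψ x := (C 0).mulVec (E x). Then the off-shell subsidiary identity holds at every x: ∂_0 ψ x + ∑ i ∈ Finset.univ \ {0}, ((C i) * hΓ).mulVec (∂_i ψ x) = - ∑ a, ((C a) * (N 0)).mulVec (∂_a e x). -/
/-!
Write `w a := ∂_a E = ∑_b N_b ∂_a ∂_b φ`. Then `∂_a ψ = C_0 w_a` and `∂_a e = h w_a`, and the
identity reduces to linear algebra once one knows `∑_a C_a w_a = 0`. That vanishing is where the
structure enters: `∑_{a,b} C_a N_b ∂_a ∂_b φ` is symmetrized by the symmetry of second derivatives
and then killed by `C_a N_b + C_b N_a = 0`. Finally `N_0 h = 1 - hΓ C_0` turns `-∑_a C_a N_0 h w_a`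
into `∑_a C_a hΓ C_0 w_a`, whose `a = 0` term is `C_0 w_0` because `C_0 hΓ = 1`.
-/

open Matrix

section Algebra

variable {ι m k l R : Type*} [Fintype ι] [Fintype k] [Fintype l]

theorem sum_mulVec_sum_mulVec_eq_zero_of_symm [Ring R] [IsAddTorsionFree R]
    (C : ι → Matrix m k R) (N : ι → Matrix k l R) (hCN : ∀ a b, C a * N b + C b * N a = 0)
    (D : ι → ι → l → R) (hD : ∀ a b, D a b = D b a) :
    ∑ a, C a *ᵥ ∑ b, N b *ᵥ D a b = 0 := by
  simp only [mulVec_sum, mulVec_mulVec]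
  refine two_nsmul_eq_zero.mp ?_
  calc 2 • ∑ a, ∑ b, (C a * N b) *ᵥ D a b
      = ∑ a, ∑ b, (C a * N b) *ᵥ D a b + ∑ a, ∑ b, (C b * N a) *ᵥ D a b := by
        rw [two_nsmul, Finset.sum_comm (f := fun a b => (C b * N a) *ᵥ D a b)]
        simp only [hD]
    _ = ∑ a, ∑ b, (C a * N b + C b * N a) *ᵥ D a b := by
        simp only [add_mulVec, Finset.sum_add_distrib]
    _ = 0 := by simp [hCN]

theorem sum_mulVec_eq_neg_sum_mulVec_mulVec [Ring R] [DecidableEq ι] [Fintype m]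
    [DecidableEq m] [DecidableEq k]
    (C : ι → Matrix m k R) (N₀ : Matrix k l R) (h : Matrix l k R) (hΓ : Matrix k m R)
    (i₀ : ι) (hinv : N₀ * h + hΓ * C i₀ = 1) (hCh : C i₀ * hΓ = 1)
    (w : ι → k → R) (hw : ∑ a, C a *ᵥ w a = 0) :
    C i₀ *ᵥ w i₀ + ∑ i ∈ Finset.univ \ {i₀}, (C i * hΓ) *ᵥ (C i₀ *ᵥ w i)
      = -∑ a, (C a * N₀) *ᵥ (h *ᵥ w a) := by
  have hNh : N₀ * h = 1 - hΓ * C i₀ := eq_sub_of_add_eq hinv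
  calc C i₀ *ᵥ w i₀ + ∑ i ∈ Finset.univ \ {i₀}, (C i * hΓ) *ᵥ (C i₀ *ᵥ w i)
      = ∑ a, (C a * hΓ) *ᵥ (C i₀ *ᵥ w a) := by
        rw [Finset.sum_eq_add_sum_sdiff_singleton_of_mem (Finset.mem_univ i₀), hCh,
          one_mulVec]
    _ = ∑ a, (C a * hΓ) *ᵥ (C i₀ *ᵥ w a) - ∑ a, C a *ᵥ w a := by rw [hw, sub_zero]
    _ = -∑ a, (C a * N₀) *ᵥ (h *ᵥ w a) := by
        simp only [mulVec_mulVec, Matrix.mul_assoc, hNh, Matrix.mul_sub, Matrix.mul_one,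
          sub_mulVec, Finset.sum_sub_distrib]
        abel

end Algebra

section Calculus

variable {E : Type*} [NormedAddCommGroup E] [NormedSpace ℝ E]
  {F : Type*} [NormedAddCommGroup F] [NormedSpace ℝ F]
  {ι m n : Type*} [Fintype ι] [Fintype m] [Fintype n]

theorem DifferentiableAt.mulVec (M : Matrix m n ℝ) {f : E → n → ℝ} {x : E}
    (hf : DifferentiableAt ℝ f x) : DifferentiableAt ℝ (fun y => M *ᵥ f y) x :=
  M.mulVecLin.toContinuousLinearMap.differentiableAt.comp x hf

theorem fderiv_mulVec_apply (M : Matrix m n ℝ) {f : E → n → ℝ} {x : E}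
    (hf : DifferentiableAt ℝ f x) (v : E) :
    fderiv ℝ (fun y => M *ᵥ f y) x v = M *ᵥ fderiv ℝ f x v := by
  have hM : HasFDerivAt (fun y => M *ᵥ f y)
      (M.mulVecLin.toContinuousLinearMap.comp (fderiv ℝ f x)) x :=
    M.mulVecLin.toContinuousLinearMap.hasFDerivAt.comp x hf.hasFDerivAt
  rw [hM.fderiv]
  rfl

theorem fderiv_fderiv_apply_right {φ : E → F} {x : E}
    (hφ : DifferentiableAt ℝ (fderiv ℝ φ) x) (v w : E) :
    fderiv ℝ (fun y => fderiv ℝ φ y v) x w = fderiv ℝ (fderiv ℝ φ) x w v := by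
  rw [fderiv_clm_apply hφ (differentiableAt_const v)]
  simp

theorem differentiableAt_sum_mulVec_fderiv (N : ι → Matrix m n ℝ) {φ : E → n → ℝ} {x : E}
    (hφ : DifferentiableAt ℝ (fderiv ℝ φ) x) (v : ι → E) :
    DifferentiableAt ℝ (fun y => ∑ b, N b *ᵥ fderiv ℝ φ y (v b)) x :=
  DifferentiableAt.fun_sum fun b _ =>
    (hφ.clm_apply (differentiableAt_const (v b))).mulVec (N b)

theorem fderiv_sum_mulVec_fderiv_apply (N : ι → Matrix m n ℝ) {φ : E → n → ℝ} {x : E}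
    (hφ : DifferentiableAt ℝ (fderiv ℝ φ) x) (v : ι → E) (w : E) :
    fderiv ℝ (fun y => ∑ b, N b *ᵥ fderiv ℝ φ y (v b)) x w
      = ∑ b, N b *ᵥ fderiv ℝ (fderiv ℝ φ) x w (v b) := by
  have hφv : ∀ b, DifferentiableAt ℝ (fun y => fderiv ℝ φ y (v b)) x := fun b =>
    hφ.clm_apply (differentiableAt_const (v b))
  rw [fderiv_fun_sum fun b _ => (hφv b).mulVec (N b), _root_.sum_apply]
  simp only [fderiv_mulVec_apply _ (hφv _), fderiv_fderiv_apply_right hφ]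

end Calculus

theorem stmt_4_general (n u c : ℕ)
    (N : Fin (n + 1) → Matrix (Fin (u + c)) (Fin u) ℝ)
    (C : Fin (n + 1) → Matrix (Fin c) (Fin (u + c)) ℝ)
    (hGeroch : ∀ a b, C a * N b + C b * N a = 0)
    (h : Matrix (Fin u) (Fin (u + c)) ℝ)
    (hΓ : Matrix (Fin (u + c)) (Fin c) ℝ)
    (hinv : N 0 * h + hΓ * C 0 = 1)
    (hCh : C 0 * hΓ = 1)
    (φ : (Fin (n + 1) → ℝ) → (Fin u → ℝ))
    (hφ : ContDiff ℝ 2 φ)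
    (E : (Fin (n + 1) → ℝ) → (Fin (u + c) → ℝ))
    (hE : ∀ x, E x = ∑ b, (N b).mulVec (fderiv ℝ φ x (Pi.single b 1)))
    (ev : (Fin (n + 1) → ℝ) → (Fin u → ℝ))
    (hev : ∀ x, ev x = h.mulVec (E x))
    (ψ : (Fin (n + 1) → ℝ) → (Fin c → ℝ))
    (hψ : ∀ x, ψ x = (C 0).mulVec (E x)) :
    ∀ x, fderiv ℝ ψ x (Pi.single 0 1)
        + ∑ i ∈ Finset.univ \ {0}, (C i * hΓ).mulVec (fderiv ℝ ψ x (Pi.single i 1))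
      = - ∑ a, (C a * N 0).mulVec (fderiv ℝ ev x (Pi.single a 1)) := by
  intro x
  have hφ₂ : DifferentiableAt ℝ (fderiv ℝ φ) x :=
    (hφ.fderiv_right (m := 1) le_rfl).differentiable one_ne_zero x
  set D : Fin (n + 1) → Fin (n + 1) → Fin u → ℝ :=
    fun a b => fderiv ℝ (fderiv ℝ φ) x (Pi.single a 1) (Pi.single b 1)
  rw [funext hE] at hψ hev
  have hEx := differentiableAt_sum_mulVec_fderiv N hφ₂ fun b => Pi.single b 1
  have hψ' : ∀ a, fderiv ℝ ψ x (Pi.single a 1) = C 0 *ᵥ ∑ b, N b *ᵥ D a b := fun a => by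
    rw [funext hψ, fderiv_mulVec_apply _ hEx, fderiv_sum_mulVec_fderiv_apply N hφ₂]
  have hev' : ∀ a, fderiv ℝ ev x (Pi.single a 1) = h *ᵥ ∑ b, N b *ᵥ D a b := fun a => by
    rw [funext hev, fderiv_mulVec_apply _ hEx, fderiv_sum_mulVec_fderiv_apply N hφ₂]
  have hD : ∀ a b, D a b = D b a := fun a b =>
    hφ.contDiffAt.isSymmSndFDerivAt (by simp) _ _
  simp only [hψ', hev']
  exact sum_mulVec_eq_neg_sum_mulVec_mulVec C (N 0) h hΓ 0 hinv hCh _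
    (sum_mulVec_sum_mulVec_eq_zero_of_symm C N hGeroch D hD)

/-- Constant-coefficient off-shell subsidiary identity: the time derivative of the
constraints equals spatial derivatives of the constraints plus terms proportional to
derivatives of the evolution equations. -/
theorem stmt_4 (n u c : ℕ)
    (N : Fin (n + 1) → Matrix (Fin (u + c)) (Fin u) ℝ)
    (C : Fin (n + 1) → Matrix (Fin c) (Fin (u + c)) ℝ)
    (hGeroch : ∀ a b, C a * N b + C b * N a = 0)
    (h : Matrix (Fin u) (Fin (u + c)) ℝ)
    (hΓ : Matrix (Fin (u + c)) (Fin c) ℝ)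
    (hhN : h * N 0 = 1)
    (hinv : N 0 * h + hΓ * C 0 = 1)
    (hCh : C 0 * hΓ = 1)
    (φ : (Fin (n + 1) → ℝ) → (Fin u → ℝ))
    (hφ : ContDiff ℝ 2 φ)
    (E : (Fin (n + 1) → ℝ) → (Fin (u + c) → ℝ))
    (hE : ∀ x, E x = ∑ b, (N b).mulVec (fderiv ℝ φ x (Pi.single b 1)))
    (ev : (Fin (n + 1) → ℝ) → (Fin u → ℝ))
    (hev : ∀ x, ev x = h.mulVec (E x))
    (ψ : (Fin (n + 1) → ℝ) → (Fin c → ℝ))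
    (hψ : ∀ x, ψ x = (C 0).mulVec (E x)) :
    ∀ x, fderiv ℝ ψ x (Pi.single 0 1)
        + ∑ i ∈ Finset.univ \ {0}, (C i * hΓ).mulVec (fderiv ℝ ψ x (Pi.single i 1))
      = - ∑ a, (C a * N 0).mulVec (fderiv ℝ ev x (Pi.single a 1)) :=
  stmt_4_general n u c N C hGeroch h hΓ hinv hCh φ hφ E hE ev hev ψ hψ
end

section
/- Let u, c : ℕ and let N0, Nk : Matrix (Fin (u + c)) (Fin u) ℝ, C0, Ck : Matrix (Fin c) (Fin (u + c)) ℝ, h : Matrix (Fin u) (Fin (u + c)) ℝ, hΓ : Matrix (Fin (u + c)) (Fin c) ℝ satisfy: C0 * Nk + Ck * N0 = 0, Ck * Nk = 0, and N0 * h + hΓ * C0 = 1. Then for every λ : ℝ the intertwining identity between the principal symbol of the evolution equations and that of the subsidiary system holds: (C0 * Nk) * (-λ • 1 + h * Nk) = (-λ • 1 + Ck * hΓ) * (C0 * Nk). -/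
open Matrix

/-- Reula's intertwining identity between the principal symbol of the evolution
equations and the principal symbol of the subsidiary system. -/
theorem stmt_7 (u c : ℕ)
    (N0 Nk : Matrix (Fin (u + c)) (Fin u) ℝ)
    (C0 Ck : Matrix (Fin c) (Fin (u + c)) ℝ)
    (h : Matrix (Fin u) (Fin (u + c)) ℝ)
    (hΓ : Matrix (Fin (u + c)) (Fin c) ℝ)
    (h1 : C0 * Nk + Ck * N0 = 0)
    (h2 : Ck * Nk = 0)
    (h3 : N0 * h + hΓ * C0 = 1) :
    ∀ lam : ℝ,
      (C0 * Nk) * (-lam • (1 : Matrix (Fin u) (Fin u) ℝ) + h * Nk)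
        = (-lam • (1 : Matrix (Fin c) (Fin c) ℝ) + Ck * hΓ) * (C0 * Nk) := by
  intro lam
  have e1 : C0 * Nk = -(Ck * N0) := by
    have := eq_neg_of_add_eq_zero_left h1
    simpa using this
  have hN0h : N0 * h = 1 - hΓ * C0 := eq_sub_of_add_eq h3
  have key : (C0 * Nk) * (h * Nk) = (Ck * hΓ) * (C0 * Nk) := by
    calc (C0 * Nk) * (h * Nk)
        = -(Ck * N0) * (h * Nk) := by rw [e1]
      _ = -(Ck * (N0 * h * Nk)) := by
          rw [Matrix.neg_mul, Matrix.mul_assoc, Matrix.mul_assoc]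
      _ = -(Ck * ((1 - hΓ * C0) * Nk)) := by rw [hN0h]
      _ = -(Ck * Nk - Ck * (hΓ * (C0 * Nk))) := by
          rw [Matrix.sub_mul, Matrix.one_mul, Matrix.mul_sub, Matrix.mul_assoc]
      _ = Ck * hΓ * (C0 * Nk) := by
          rw [h2, zero_sub, neg_neg, Matrix.mul_assoc]
  rw [Matrix.add_mul, Matrix.mul_add, key, Matrix.smul_mul, Matrix.mul_smul,
    Matrix.one_mul, Matrix.mul_one]
end

section
/- Let u, c, m : ℕ and let N0, Nk : Matrix (Fin (u + c)) (Fin u) ℝ, C0, Ck : Matrix (Fin c) (Fin (u + c)) ℝ, h : Matrix (Fin u) (Fin (u + c)) ℝ, hΓ : Matrix (Fin (u + c)) (Fin c) ℝ, Mk : Matrix (Fin m) (Fin c) ℝ and NΔ : Matrix (Fin c) (Fin m) ℝ satisfy: C0 * Nk + Ck * N0 = 0, Ck * Nk = 0, N0 * h + hΓ * C0 = 1, and Mk * (C0 * Nk) = 0. Then for every λ : ℝ, (C0 * Nk) * (-λ • 1 + h * Nk) = (-λ • 1 + (Ck * hΓ + NΔ * Mk)) * (C0 * Nk); that is, the full subsidiary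 symbol B = Ck * hΓ + NΔ * Mk, for an arbitrary choice of the free matrix NΔ, intertwines with the evolution symbol A = h * Nk through C0 * Nk. -/
open Matrix

/-- The full subsidiary symbol `B = Ck * hΓ + NΔ * Mk`, for an arbitrary free matrix
`NΔ`, intertwines with the evolution symbol `A = h * Nk` through `C0 * Nk`. -/
theorem stmt_8 (u c m : ℕ)
    (N0 Nk : Matrix (Fin (u + c)) (Fin u) ℝ)
    (C0 Ck : Matrix (Fin c) (Fin (u + c)) ℝ)
    (h : Matrix (Fin u) (Fin (u + c)) ℝ)
    (hΓ : Matrix (Fin (u + c)) (Fin c) ℝ)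
    (Mk : Matrix (Fin m) (Fin c) ℝ)
    (NΔ : Matrix (Fin c) (Fin m) ℝ)
    (h1 : C0 * Nk + Ck * N0 = 0)
    (h2 : Ck * Nk = 0)
    (h3 : N0 * h + hΓ * C0 = 1)
    (h4 : Mk * (C0 * Nk) = 0) :
    ∀ lam : ℝ,
      (C0 * Nk) * (-lam • (1 : Matrix (Fin u) (Fin u) ℝ) + h * Nk)
        = (-lam • (1 : Matrix (Fin c) (Fin c) ℝ) + (Ck * hΓ + NΔ * Mk)) * (C0 * Nk) := by
  intro lam
  have hCN : Ck * N0 = -(C0 * Nk) := by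
    rw [eq_neg_iff_add_eq_zero]; rw [← h1]; abel
  have hG : hΓ * C0 = 1 - N0 * h := by rw [← h3]; abel
  have key : Ck * hΓ * (C0 * Nk) = (C0 * Nk) * (h * Nk) := by
    calc Ck * hΓ * (C0 * Nk) = Ck * (hΓ * C0) * Nk := by
          simp only [Matrix.mul_assoc]
      _ = Ck * (1 - N0 * h) * Nk := by rw [hG]
      _ = Ck * Nk - Ck * N0 * (h * Nk) := by
          simp only [Matrix.mul_sub, Matrix.sub_mul, Matrix.mul_one, Matrix.mul_assoc]
      _ = (C0 * Nk) * (h * Nk) := by rw [h2, hCN]; simp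
  have key2 : NΔ * Mk * (C0 * Nk) = 0 := by
    rw [Matrix.mul_assoc, h4, Matrix.mul_zero]
  simp only [Matrix.add_mul, Matrix.mul_add, Matrix.smul_mul, Matrix.mul_smul,
    Matrix.mul_one, Matrix.one_mul, key, key2, add_zero]
end

section
/- Let u, c : ℕ, let P : (Fin u → ℝ) →ₗ[ℝ] (Fin c → ℝ) be surjective, and let A be an endomorphism of Fin u → ℝ and B an endomorphism of Fin c → ℝ with P ∘ₗ A = B ∘ₗ P. If there exists a basis of Fin u → ℝ consisting of eigenvectors of A, then: (1) there exists a basis of Fin c → ℝ consisting of eigenvectors of B, and (2) every eigenvalue of B is an eigenvalue of A. -/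
/-!
The intertwining relation `P ∘ₗ A = B ∘ₗ P` makes `P` carry each eigenspace of `A` into the
eigenspace of `B` for the same eigenvalue. Since `A` is diagonalizable and `P` is surjective, the
eigenspaces of `B` for eigenvalues of `A` therefore already span the whole target. A spanning family
of eigenvectors contains an eigenbasis, and independence of eigenspaces leaves no room for an
eigenvalue of `B` outside those of `A`.
-/

namespace Module.End

section CommRing

variable {R V W : Type*} [CommRing R] [AddCommGroup V] [Module R V] [AddCommGroup W] [Module R W]
  {A : End R V} {B : End R W} {P : V →ₗ[R] W}

theorem map_eigenspace_le_of_comp_eq (hcomm : P ∘ₗ A = B ∘ₗ P) (μ : R) :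
    (A.eigenspace μ).map P ≤ B.eigenspace μ := by
  rintro _ ⟨x, hx, rfl⟩
  rw [SetLike.mem_coe, mem_eigenspace_iff] at hx
  rw [mem_eigenspace_iff, ← LinearMap.comp_apply, ← hcomm, LinearMap.comp_apply, hx, map_smul]

theorem biSup_eigenspace_eq_top_of_surjective (hP : Function.Surjective P)
    (hcomm : P ∘ₗ A = B ∘ₗ P) {S : Set R} (hA : ⨆ μ ∈ S, A.eigenspace μ = ⊤) :
    ⨆ μ ∈ S, B.eigenspace μ = ⊤ := by
  refine top_unique ?_
  calc ⊤ = (⊤ : Submodule R V).map P := by rw [Submodule.map_top, LinearMap.range_eq_top.mpr hP]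
    _ = ⨆ μ ∈ S, (A.eigenspace μ).map P := by simp only [← hA, Submodule.map_iSup]
    _ ≤ ⨆ μ ∈ S, B.eigenspace μ := iSup₂_mono fun μ _ => map_eigenspace_le_of_comp_eq hcomm μ

theorem biSup_eigenspace_eq_top_of_basis_hasEigenvector {ι : Type*} (b : Basis ι R V)
    (hb : ∀ i, ∃ μ, A.HasEigenvector μ (b i)) :
    ⨆ μ ∈ {μ | A.HasEigenvalue μ}, A.eigenspace μ = ⊤ := by
  refine top_unique ?_
  rw [← b.span_eq, Submodule.span_le]
  rintro _ ⟨i, rfl⟩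
  obtain ⟨μ, hμ⟩ := hb i
  exact Submodule.mem_iSup_of_mem μ
    (Submodule.mem_iSup_of_mem (hasEigenvalue_of_hasEigenvector hμ) hμ.1)

theorem mem_of_hasEigenvalue_of_biSup_eigenspace_eq_top [IsDomain R] [Module.IsTorsionFree R W]
    {S : Set R} (hB : ⨆ μ ∈ S, B.eigenspace μ = ⊤) {ν : R} (hν : B.HasEigenvalue ν) : ν ∈ S := by
  by_contra hνS
  have := B.eigenspaces_iSupIndep.disjoint_biSup hνS
  rw [hB, disjoint_top] at this
  exact hν this

end CommRing

theorem exists_basis_hasEigenvector_of_biSup_eigenspace_eq_top {K V : Type*} [Field K]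
    [AddCommGroup V] [Module K V] [FiniteDimensional K V] {B : End K V} {ι : Type*} [Fintype ι]
    (hι : Fintype.card ι = Module.finrank K V) {S : Set K} (hB : ⨆ μ ∈ S, B.eigenspace μ = ⊤) :
    ∃ b : Basis ι K V, ∀ i, ∃ ν, B.HasEigenvector ν (b i) := by
  set s : Set V := ⋃ μ ∈ S, (B.eigenspace μ : Set V)
  have hs : ⊤ ≤ Submodule.span K s := hB ▸ iSup₂_le fun μ hμ x hx =>
    Submodule.subset_span (Set.mem_biUnion hμ hx)
  let b₀ := Basis.ofSpan hs
  have : Fintype _ := FiniteDimensional.fintypeBasisIndex b₀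
  let e := Fintype.equivOfCardEq ((finrank_eq_card_basis b₀).symm.trans hι.symm)
  let b := b₀.reindex e
  refine ⟨b, fun i => ?_⟩
  obtain ⟨ν, -, hν⟩ :=
    Set.mem_iUnion₂.mp (Basis.ofSpan_subset hs ⟨_, (b₀.reindex_apply e i).symm⟩)
  exact ⟨ν, hν, b.ne_zero i⟩

end Module.End

open Module.End in
/-- If a surjective map `P` intertwines the endomorphisms `A` and `B` and `A` is
diagonalizable (admits an eigenbasis), then `B` is diagonalizable and every eigenvalue
of `B` is an eigenvalue of `A`. -/
theorem stmt_12 (u c : ℕ)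
    (P : (Fin u → ℝ) →ₗ[ℝ] (Fin c → ℝ))
    (hP : Function.Surjective P)
    (A : Module.End ℝ (Fin u → ℝ))
    (B : Module.End ℝ (Fin c → ℝ))
    (hcomm : P ∘ₗ A = B ∘ₗ P)
    (hA : ∃ bA : Module.Basis (Fin u) ℝ (Fin u → ℝ),
      ∀ i, ∃ μ : ℝ, Module.End.HasEigenvector A μ (bA i)) :
    (∃ bB : Module.Basis (Fin c) ℝ (Fin c → ℝ),
      ∀ j, ∃ ν : ℝ, Module.End.HasEigenvector B ν (bB j)) ∧
    (∀ ν : ℝ, Module.End.HasEigenvalue B ν → Module.End.HasEigenvalue A ν) := by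
  obtain ⟨bA, hbA⟩ := hA
  have hB := biSup_eigenspace_eq_top_of_surjective hP hcomm
    (biSup_eigenspace_eq_top_of_basis_hasEigenvector bA hbA)
  exact ⟨exists_basis_hasEigenvector_of_biSup_eigenspace_eq_top (by simp) hB,
    fun ν hν => mem_of_hasEigenvalue_of_biSup_eigenspace_eq_top hB hν⟩
end

section
/- Let k : Fin 3 → ℝ with k ≠ 0, and let T be the ℝ-linear endomorphism of (Fin 3 → ℝ) × (Fin 3 → ℝ) given by T (E, B) = (k ×₃ B, -(k ×₃ E)), where ×₃ is the cross product on Fin 3 → ℝ. Then T is diagonalizable over ℝ: its eigenvalues are exactly 0, ‖k‖ and -‖k‖ (with ‖k‖ := Real.sqrt (∑ i, (k i)^2)), the eigenspace of 0 is {(a • k, b • k) : a b : ℝ} of dimension 2, the eigenspaces of ‖k‖ and of -‖k‖ each have dimension 2, and the three eigenspaces span the whole 6-dimensional space. -/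
/-!
The vector triple product gives `k ⨯₃ (k ⨯₃ (k ⨯₃ x)) = -(k ⬝ᵥ k) • k ⨯₃ x`, hence
`T ^ 3 = ‖k‖² • T`. So `T` is annihilated by `X (X - ‖k‖) (X + ‖k‖)`, whose roots are distinct:
every eigenvalue is one of them and, the factors being pairwise coprime, the three eigenspaces
span. The kernel of `T` is `ℝ k × ℝ k`; for `μ = ±‖k‖` the eigenspace is the graph of
`E ↦ -μ⁻¹ • k ⨯₃ E` over the plane `k ⬝ᵥ E = 0`. Both are planes.
-/

open Matrix Module Module.End Polynomial

section

variable {K V : Type*} [Field K] [AddCommGroup V] [Module K V]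

theorem Module.End.eigenspace_eq_ker_aeval (f : End K V) (a : K) :
    f.eigenspace a = LinearMap.ker (aeval f (X - C a)) := by
  simp [eigenspace_def, Algebra.algebraMap_eq_smul_one]

theorem Module.End.aeval_X_sub_C_zero_mul_X_sub_C_mul_X_sub_C_neg (f : End K V) (μ : K) :
    aeval f ((X - C 0) * (X - C μ) * (X - C (-μ))) = f ^ 3 - μ ^ 2 • f := by
  have : ((X - C 0) * (X - C μ) * (X - C (-μ)) : K[X]) = X ^ 3 - C (μ ^ 2) * X := by
    simp only [C_0, C_neg, C_pow]; ring
  rw [this, map_sub, map_mul, aeval_C, aeval_X, map_pow, aeval_X, Algebra.smul_def]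

theorem Module.End.eq_zero_or_eq_or_eq_neg_of_hasEigenvalue {f : End K V} {μ ν : K}
    (hf : f ^ 3 = μ ^ 2 • f) (hν : f.HasEigenvalue ν) : ν = 0 ∨ ν = μ ∨ ν = -μ := by
  obtain ⟨x, hx⟩ := hν.exists_hasEigenvector
  have hroot : ((X - C 0) * (X - C μ) * (X - C (-μ))).eval ν • x = 0 := by
    rw [← aeval_apply_of_hasEigenvector hx, aeval_X_sub_C_zero_mul_X_sub_C_mul_X_sub_C_neg, hf,
      sub_self, LinearMap.zero_apply]
  simpa [sub_eq_zero, hx.2, or_assoc, eq_neg_iff_add_eq_zero] using hroot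

theorem Module.End.eigenspace_zero_sup_eigenspace_sup_eigenspace_neg {f : End K V} {μ : K}
    (hf : f ^ 3 = μ ^ 2 • f) (hμ : μ ≠ 0) (h2 : (2 : K) ≠ 0) :
    f.eigenspace 0 ⊔ f.eigenspace μ ⊔ f.eigenspace (-μ) = ⊤ := by
  have coprime {a b : K} (hab : a ≠ b) : IsCoprime (X - C a) (X - C b) :=
    isCoprime_X_sub_C_of_isUnit_sub (sub_ne_zero.mpr hab).isUnit
  have h0μ : (0 : K) ≠ μ := hμ.symm
  have h0μ' : (0 : K) ≠ -μ := by simpa [eq_comm] using hμ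
  have hμμ : μ ≠ -μ := fun h =>
    hμ ((mul_eq_zero.mp (by linear_combination h : (2 : K) * μ = 0)).resolve_left h2)
  rw [eigenspace_eq_ker_aeval, eigenspace_eq_ker_aeval, eigenspace_eq_ker_aeval,
    sup_ker_aeval_eq_ker_aeval_mul_of_coprime _ (coprime h0μ),
    sup_ker_aeval_eq_ker_aeval_mul_of_coprime _ ((coprime h0μ').mul_left (coprime hμμ)),
    aeval_X_sub_C_zero_mul_X_sub_C_mul_X_sub_C_neg, hf, sub_self, LinearMap.ker_zero]

end

section

variable {K : Type*} [Field K] {k : Fin 3 → K}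

theorem cross_eq_zero_iff_exists_smul (hk : k ⬝ᵥ k ≠ 0) {x : Fin 3 → K} :
    k ⨯₃ x = 0 ↔ ∃ a : K, a • k = x := by
  constructor
  · intro h
    have expand := cross_cross_eq_smul_sub_smul' k k x
    rw [h, map_zero, eq_comm, sub_eq_zero] at expand
    refine ⟨(k ⬝ᵥ k)⁻¹ * (k ⬝ᵥ x), ?_⟩
    rw [mul_smul, expand, smul_smul, inv_mul_cancel₀ hk, one_smul]
  · rintro ⟨a, rfl⟩
    rw [map_smul, cross_self, smul_zero]

theorem finrank_ker_dotProduct (hk : k ⬝ᵥ k ≠ 0) :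
    finrank K (LinearMap.ker (dotProductBilin K K k)) = 2 := by
  have hne : dotProductBilin K K k ≠ 0 := fun h => hk (by simpa using LinearMap.congr_fun h k)
  have := Module.Dual.finrank_ker_add_one_of_ne_zero hne
  rw [finrank_fin_fun] at this
  omega

variable (k) in
def maxwellSymbol : End K ((Fin 3 → K) × (Fin 3 → K)) :=
  (crossProduct k ∘ₗ LinearMap.snd K _ _).prod (-(crossProduct k ∘ₗ LinearMap.fst K _ _))

@[simp]
theorem maxwellSymbol_apply (EB : (Fin 3 → K) × (Fin 3 → K)) :
    maxwellSymbol k EB = (k ⨯₃ EB.2, -(k ⨯₃ EB.1)) := rfl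

variable (k) in
theorem maxwellSymbol_pow_three : maxwellSymbol k ^ 3 = (k ⬝ᵥ k) • maxwellSymbol k := by
  have triple (x : Fin 3 → K) : k ⨯₃ (k ⨯₃ (k ⨯₃ x)) = -(k ⬝ᵥ k) • (k ⨯₃ x) := by
    rw [cross_cross_eq_smul_sub_smul', dot_self_cross, zero_smul, zero_sub, neg_smul]
  refine LinearMap.ext fun EB => ?_
  simp only [pow_succ, pow_zero, one_mul, Module.End.mul_apply, maxwellSymbol_apply, map_neg,
    neg_neg, triple, LinearMap.smul_apply, Prod.smul_mk, neg_smul, smul_neg]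

theorem eigenspace_maxwellSymbol_zero (hk : k ⬝ᵥ k ≠ 0) :
    (maxwellSymbol k).eigenspace 0 =
      LinearMap.range
        ((LinearMap.toSpanSingleton K _ k).prodMap (LinearMap.toSpanSingleton K _ k)) := by
  ext ⟨E, B⟩
  simp only [eigenspace_zero, LinearMap.mem_ker, maxwellSymbol_apply, Prod.mk_eq_zero,
    neg_eq_zero, cross_eq_zero_iff_exists_smul hk, LinearMap.range_prodMap, Submodule.mem_prod,
    LinearMap.mem_range, LinearMap.toSpanSingleton_apply]
  exact and_comm

theorem finrank_eigenspace_maxwellSymbol_zero (hk : k ⬝ᵥ k ≠ 0) :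
    finrank K ((maxwellSymbol k).eigenspace 0) = 2 := by
  have hk0 : k ≠ 0 := by rintro rfl; simp at hk
  have hinj := (smul_left_injective K hk0).prodMap (smul_left_injective K hk0)
  rw [eigenspace_maxwellSymbol_zero hk, LinearMap.finrank_range_of_inj hinj]
  simp

theorem eigenspace_maxwellSymbol_of_sq_eq {μ : K} (hμ : μ ≠ 0) (hμk : μ ^ 2 = k ⬝ᵥ k) :
    (maxwellSymbol k).eigenspace μ =
      (LinearMap.ker (dotProductBilin K K k)).map (LinearMap.id.prod (-μ⁻¹ • crossProduct k)) := by
  ext ⟨E, B⟩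
  simp only [mem_eigenspace_iff, maxwellSymbol_apply, Prod.smul_mk, Prod.mk.injEq,
    Submodule.mem_map, LinearMap.mem_ker, dotProductBilin_apply_apply]
  constructor
  · rintro ⟨hB, hE⟩
    refine ⟨E, ?_, Prod.ext rfl ?_⟩
    · have := dot_self_cross k B
      rw [hB, dotProduct_smul, smul_eq_mul] at this
      exact (mul_eq_zero.mp this).resolve_left hμ
    · change -μ⁻¹ • k ⨯₃ E = B
      rw [neg_smul, ← smul_neg, hE, smul_smul, inv_mul_cancel₀ hμ, one_smul]
  · rintro ⟨x, hx, hxEB⟩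
    obtain ⟨rfl, rfl⟩ : x = E ∧ -μ⁻¹ • k ⨯₃ x = B := Prod.ext_iff.mp hxEB
    rw [map_smul, cross_cross_eq_smul_sub_smul', hx, zero_smul, zero_sub, ← hμk, smul_neg,
      smul_smul, smul_smul]
    constructor
    · rw [← neg_smul]
      congr 1
      field_simp
    · rw [mul_neg, mul_inv_cancel₀ hμ, neg_one_smul]

theorem finrank_eigenspace_maxwellSymbol_of_sq_eq {μ : K} (hμ : μ ≠ 0) (hμk : μ ^ 2 = k ⬝ᵥ k) :
    finrank K ((maxwellSymbol k).eigenspace μ) = 2 := by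
  have hk : k ⬝ᵥ k ≠ 0 := hμk ▸ pow_ne_zero 2 hμ
  have hinj : Function.Injective (LinearMap.id.prod (-μ⁻¹ • crossProduct k)) :=
    fun x y h => congrArg Prod.fst h
  rw [eigenspace_maxwellSymbol_of_sq_eq hμ hμk]
  exact (Submodule.equivMapOfInjective _ hinj _).finrank_eq.symm.trans (finrank_ker_dotProduct hk)

end

/-- The flat Maxwell principal symbol `T (E, B) = (k ×₃ B, -(k ×₃ E))` is diagonalizable
over ℝ, with eigenvalues exactly `0, ‖k‖, -‖k‖`: the eigenspace of `0` is
`{(a•k, b•k)}` of dimension 2, the eigenspaces of `±‖k‖` each have dimension 2, and the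
three eigenspaces span the whole space. -/
theorem stmt_16 (k : Fin 3 → ℝ) (hk : k ≠ 0)
    (T : ((Fin 3 → ℝ) × (Fin 3 → ℝ)) →ₗ[ℝ] ((Fin 3 → ℝ) × (Fin 3 → ℝ)))
    (hT : ∀ EB : (Fin 3 → ℝ) × (Fin 3 → ℝ), T EB = (k ⨯₃ EB.2, -(k ⨯₃ EB.1)))
    (nk : ℝ) (hnk : nk = Real.sqrt (∑ i, (k i) ^ 2)) :
    (∀ μ : ℝ, Module.End.HasEigenvalue T μ ↔ (μ = 0 ∨ μ = nk ∨ μ = -nk)) ∧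
    (Module.End.eigenspace T 0 : Set ((Fin 3 → ℝ) × (Fin 3 → ℝ)))
      = {p | ∃ a b : ℝ, p = (a • k, b • k)} ∧
    Module.finrank ℝ (Module.End.eigenspace T 0) = 2 ∧
    Module.finrank ℝ (Module.End.eigenspace T nk) = 2 ∧
    Module.finrank ℝ (Module.End.eigenspace T (-nk)) = 2 ∧
    Module.End.eigenspace T 0 ⊔ Module.End.eigenspace T nk
      ⊔ Module.End.eigenspace T (-nk) = ⊤ := by
  obtain rfl : T = maxwellSymbol k := LinearMap.ext hT
  have hkk : k ⬝ᵥ k ≠ 0 := fun h => hk (dotProduct_self_eq_zero.mp h)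
  have hnk_sq : nk ^ 2 = k ⬝ᵥ k := by
    rw [hnk, Real.sq_sqrt (by positivity)]
    simp [dotProduct, sq]
  have hnk0 : nk ≠ 0 := by
    rintro rfl
    exact hkk (by simpa using hnk_sq.symm)
  have hneg_sq : (-nk) ^ 2 = k ⬝ᵥ k := by rw [neg_sq, hnk_sq]
  have hneg0 : -nk ≠ 0 := neg_ne_zero.mpr hnk0
  have hpow : maxwellSymbol k ^ 3 = nk ^ 2 • maxwellSymbol k := by
    rw [hnk_sq, maxwellSymbol_pow_three]
  have finrank_zero := finrank_eigenspace_maxwellSymbol_zero hkk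
  have finrank_pos := finrank_eigenspace_maxwellSymbol_of_sq_eq hnk0 hnk_sq
  have finrank_neg := finrank_eigenspace_maxwellSymbol_of_sq_eq hneg0 hneg_sq
  have hasEigenvalue_of_finrank {μ : ℝ} (h : finrank ℝ ((maxwellSymbol k).eigenspace μ) = 2) :
      (maxwellSymbol k).HasEigenvalue μ :=
    hasEigenvalue_iff.mpr fun hbot => by rw [hbot, finrank_bot] at h; omega
  refine ⟨fun μ => ⟨eq_zero_or_eq_or_eq_neg_of_hasEigenvalue hpow, ?_⟩, ?_, finrank_zero,
    finrank_pos, finrank_neg,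
    eigenspace_zero_sup_eigenspace_sup_eigenspace_neg hpow hnk0 two_ne_zero⟩
  · rintro (rfl | rfl | rfl)
    exacts [hasEigenvalue_of_finrank finrank_zero, hasEigenvalue_of_finrank finrank_pos,
      hasEigenvalue_of_finrank finrank_neg]
  · rw [eigenspace_maxwellSymbol_zero hkk]
    ext ⟨E, B⟩
    simp [eq_comm]
end
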